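/- Fix integers k ≥ 1 and M ≥ 1, and reals σ_w² > 0, ζ > 0, σ_a² > 0, γ > 0. Let Λ(z) = e^{σ_a²/ζ}·(∫_{σ_w²+σ_a²}^∞ v^{-k} e^{-z/v} e^{-v/ζ} dv)/(∫_{σ_w²}^∞ v^{-k} e^{-z/v} e^{-v/ζ} dv) for z ≥ 0, define the boundary curve C = {x ∈ (0,∞)^M : ∏_{m=1}^M Λ(k·x_m) = γ} and, for δ > 0, the boundary region R_B^δ = {x ∈ ℝ^M : ∃ y ∈ C with max_{1≤m≤M} |x_m − y_m| < δ}. Let μ be the probability measure on ℝ with density f(t) = (1/ζ)e^{-(t−σ_w²)/ζ} for t ≥ σ_w² (and 0 otherwise), i.e., the law of σ_w² plus an Exponential random variable of mean ζ. Then the product measure satisfies μ^{⊗M}(R_B^δ) ≤ 2Mδ/ζ; in particular, for every ε > 0 there exists δ > 0, independent of k, such that μ^{⊗M}(R_B^δ) < ε. -/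

import Mathlib

/-!
`Λ` is positive and strictly increasing: for `z₁ < z₂` the integrand at `z₁` is the one at `z₂`
times `exp ((z₂ - z₁) / v)`, a factor decreasing in `v`, so it is below its value at
`v = σ_w² + σ_a²` on the numerator's range and above it on the rest of the denominator's.
Hence `φ t = Λ k (k t)` is positive and strictly increasing too.

Now move the coordinates of `x` one at a time from `x + δ` to `x - δ`. If `x` is within `δ` of the
level set `∏ φ = γ`, the products `∏ φ` along this chain start above `γ` and end below it, so
some step, which changes a single coordinate `m`, crosses `γ`. Along coordinate `m` the set of such
crossings has diameter at most `2δ` by strict monotonicity, and `μ` has density at most `1/ζ`, so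
each of the `M` crossing bands has probability at most `2δ/ζ`.
-/

open MeasureTheory Set Real
open scoped ENNReal

namespace MeasureTheory

section SetIntegral

variable {α : Type*} [MeasurableSpace α] {μ : Measure α} {s : Set α} {f g : α → ℝ}

lemma setIntegral_pos_of_forall_pos (hs : MeasurableSet s) (hμs : μ s ≠ 0)
    (hf : IntegrableOn f s μ) (hpos : ∀ x ∈ s, 0 < f x) : 0 < ∫ x in s, f x ∂μ := by
  rw [setIntegral_pos_iff_support_of_nonneg_ae
    ((ae_restrict_iff' hs).2 (.of_forall fun x hx => (hpos x hx).le)) hf]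
  exact (pos_iff_ne_zero.2 hμs).trans_le (measure_mono fun x hx => ⟨(hpos x hx).ne', hx⟩)

lemma setIntegral_lt_setIntegral_of_forall_lt (hs : MeasurableSet s) (hμs : μ s ≠ 0)
    (hf : IntegrableOn f s μ) (hg : IntegrableOn g s μ) (hlt : ∀ x ∈ s, f x < g x) :
    ∫ x in s, f x ∂μ < ∫ x in s, g x ∂μ := by
  have := setIntegral_pos_of_forall_pos hs hμs (hg.sub hf) fun x hx => sub_pos.2 (hlt x hx)
  rwa [Pi.sub_def, integral_sub hg hf, sub_pos] at this

end SetIntegral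

lemma Measure.pi_le_of_forall_measure_update_le {ι : Type*} [Fintype ι] [DecidableEq ι]
    {X : ι → Type*} [∀ i, MeasurableSpace (X i)] {μ : ∀ i, Measure (X i)}
    [∀ i, IsProbabilityMeasure (μ i)] {s : Set (∀ i, X i)} (hs : MeasurableSet s) (i : ι)
    {c : ℝ≥0∞} (h : ∀ x, μ i (Function.update x i ⁻¹' s) ≤ c) : Measure.pi μ s ≤ c := by
  have hslice := lintegral_le_of_lmarginal_le (μ := μ) {i} (measurable_one.indicator hs)
    (measurable_const (a := c)) fun x => by
      simp only [lmarginal_singleton, lintegral_const, measure_univ, mul_one]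
      exact (lintegral_indicator_one (measurable_update x hs)).trans_le (h x)
  simpa [lintegral_indicator_one hs] using hslice

end MeasureTheory

section LikelihoodRatio

variable {g : ℝ → ℝ} {a b : ℝ}

lemma integrableOn_mul_exp_neg_div (hg : IntegrableOn g (Ioi b)) (hb : 0 < b) (z : ℝ) :
    IntegrableOn (fun v => g v * exp (-z / v)) (Ioi b) := by
  refine hg.mul_bdd (c := exp (|z| / b)) (by fun_prop) ?_
  filter_upwards [ae_restrict_mem measurableSet_Ioi] with v (hv : b < v)
  rw [norm_of_nonneg (exp_pos _).le, exp_le_exp]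
  calc -z / v ≤ |z| / v := by gcongr; exacts [(hb.trans hv).le, neg_le_abs z]
    _ ≤ |z| / b := by gcongr

lemma setIntegral_Ioi_mul_exp_neg_div_pos (hg : IntegrableOn g (Ioi b))
    (hpos : ∀ v ∈ Ioi b, 0 < g v) (hb : 0 < b) (z : ℝ) :
    0 < ∫ v in Ioi b, g v * exp (-z / v) :=
  setIntegral_pos_of_forall_pos measurableSet_Ioi (by simp) (integrableOn_mul_exp_neg_div hg hb z)
    fun v hv => mul_pos (hpos v hv) (exp_pos _)

lemma exp_neg_div_eq_exp_sub_div_mul (z₁ z₂ v : ℝ) :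
    exp (-z₁ / v) = exp ((z₂ - z₁) / v) * exp (-z₂ / v) := by
  rw [← exp_add]
  ring_nf

lemma setIntegral_Ioi_mul_exp_neg_div_lt (hg : IntegrableOn g (Ioi a))
    (hpos : ∀ v ∈ Ioi a, 0 < g v) (ha : 0 < a) {z₁ z₂ : ℝ} (hz : z₁ < z₂) :
    ∫ v in Ioi a, g v * exp (-z₁ / v) <
      exp ((z₂ - z₁) / a) * ∫ v in Ioi a, g v * exp (-z₂ / v) := by
  rw [← integral_const_mul]
  refine setIntegral_lt_setIntegral_of_forall_lt measurableSet_Ioi (by simp)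
    (integrableOn_mul_exp_neg_div hg ha z₁)
    ((integrableOn_mul_exp_neg_div hg ha z₂).const_mul _) fun v (hv : a < v) => ?_
  rw [exp_neg_div_eq_exp_sub_div_mul z₁ z₂, mul_left_comm (g v)]
  exact mul_lt_mul_of_pos_right (exp_lt_exp.2 (div_lt_div_of_pos_left (sub_pos.2 hz) ha hv))
    (mul_pos (hpos v hv) (exp_pos _))

lemma exp_mul_setIntegral_Ioc_mul_exp_neg_div_le (hg : IntegrableOn g (Ioi b))
    (hpos : ∀ v ∈ Ioi b, 0 < g v) (hb : 0 < b) {z₁ z₂ : ℝ} (hz : z₁ ≤ z₂) :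
    exp ((z₂ - z₁) / a) * ∫ v in Ioc b a, g v * exp (-z₂ / v) ≤
      ∫ v in Ioc b a, g v * exp (-z₁ / v) := by
  rw [← integral_const_mul]
  refine setIntegral_mono_on
    (((integrableOn_mul_exp_neg_div hg hb z₂).mono_set Ioc_subset_Ioi_self).const_mul _)
    ((integrableOn_mul_exp_neg_div hg hb z₁).mono_set Ioc_subset_Ioi_self) measurableSet_Ioc
    fun v hv => ?_
  rw [exp_neg_div_eq_exp_sub_div_mul z₁ z₂, mul_left_comm (g v)]
  have hv₀ : 0 < v := hb.trans hv.1
  exact mul_le_mul_of_nonneg_right (exp_le_exp.2 (by gcongr; exact hv.2))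
    (mul_pos (hpos v hv.1) (exp_pos _)).le

theorem strictMono_setIntegral_Ioi_div (hg : IntegrableOn g (Ioi b))
    (hpos : ∀ v ∈ Ioi b, 0 < g v) (hb : 0 < b) (hba : b < a) :
    StrictMono fun z =>
      (∫ v in Ioi a, g v * exp (-z / v)) / ∫ v in Ioi b, g v * exp (-z / v) := by
  intro z₁ z₂ hz
  have ha : 0 < a := hb.trans hba
  have hga : IntegrableOn g (Ioi a) := hg.mono_set (Ioi_subset_Ioi hba.le)
  have hposa : ∀ v ∈ Ioi a, 0 < g v := fun v hv => hpos v (hba.trans hv)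
  have hsplit : ∀ z, ∫ v in Ioi b, g v * exp (-z / v) =
      (∫ v in Ioc b a, g v * exp (-z / v)) + ∫ v in Ioi a, g v * exp (-z / v) := fun z => by
    rw [← setIntegral_union (Ioc_disjoint_Ioi le_rfl) measurableSet_Ioi
      ((integrableOn_mul_exp_neg_div hg hb z).mono_set Ioc_subset_Ioi_self)
      (integrableOn_mul_exp_neg_div hga ha z), Ioc_union_Ioi_eq_Ioi hba.le]
  have hfar := setIntegral_Ioi_mul_exp_neg_div_lt hga hposa ha hz
  have hnear := exp_mul_setIntegral_Ioc_mul_exp_neg_div_le (a := a) hg hpos hb hz.le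
  have hIa := setIntegral_Ioi_mul_exp_neg_div_pos hga hposa ha z₂
  have hJ : 0 < ∫ v in Ioc b a, g v * exp (-z₂ / v) :=
    setIntegral_pos_of_forall_pos measurableSet_Ioc (by simpa using hba)
      ((integrableOn_mul_exp_neg_div hg hb z₂).mono_set Ioc_subset_Ioi_self)
      fun v hv => mul_pos (hpos v hv.1) (exp_pos _)
  dsimp only
  rw [div_lt_div_iff₀ (setIntegral_Ioi_mul_exp_neg_div_pos hg hpos hb z₁)
    (setIntegral_Ioi_mul_exp_neg_div_pos hg hpos hb z₂), hsplit, hsplit]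
  nlinarith [mul_lt_mul_of_pos_right hfar hJ, mul_le_mul_of_nonneg_left hnear hIa.le]

end LikelihoodRatio

section TailIntegral

variable {ζ b a : ℝ}

lemma integrableOn_inv_pow_mul_exp_neg_div (k : ℕ) (hζ : 0 < ζ) (hb : 0 < b) :
    IntegrableOn (fun v => (v ^ k)⁻¹ * exp (-v / ζ)) (Ioi b) := by
  have hexp : IntegrableOn (fun v => exp (-v / ζ)) (Ioi b) := by
    simpa only [neg_mul, ← neg_div, inv_mul_eq_div] using exp_neg_integrableOn_Ioi b (inv_pos.2 hζ)
  refine hexp.bdd_mul (c := (b ^ k)⁻¹) (by fun_prop) ?_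
  filter_upwards [ae_restrict_mem measurableSet_Ioi] with v (hv : b < v)
  have := hb.trans hv
  rw [norm_of_nonneg (by positivity)]
  gcongr

lemma likelihoodRatio_pos (k : ℕ) (hζ : 0 < ζ) (hb : 0 < b) (ha : 0 < a) (z : ℝ) :
    0 < exp (a / ζ) * (∫ v in Ioi (b + a), (v ^ k)⁻¹ * exp (-z / v) * exp (-v / ζ)) /
      ∫ v in Ioi b, (v ^ k)⁻¹ * exp (-z / v) * exp (-v / ζ) := by
  simp only [mul_right_comm _ (exp (-z / _))]
  have hpos : ∀ c > 0, ∀ v ∈ Ioi c, 0 < (v ^ k)⁻¹ * exp (-v / ζ) := fun c hc v (hv : c < v) => by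
    have := hc.trans hv; positivity
  exact div_pos (mul_pos (exp_pos _) (setIntegral_Ioi_mul_exp_neg_div_pos
    (integrableOn_inv_pow_mul_exp_neg_div k hζ (by positivity)) (hpos _ (by positivity))
      (by positivity) z))
    (setIntegral_Ioi_mul_exp_neg_div_pos (integrableOn_inv_pow_mul_exp_neg_div k hζ hb)
      (hpos b hb) hb z)

lemma strictMono_likelihoodRatio (k : ℕ) (hζ : 0 < ζ) (hb : 0 < b) (ha : 0 < a) :
    StrictMono fun z => exp (a / ζ) *
      (∫ v in Ioi (b + a), (v ^ k)⁻¹ * exp (-z / v) * exp (-v / ζ)) /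
      ∫ v in Ioi b, (v ^ k)⁻¹ * exp (-z / v) * exp (-v / ζ) := by
  have hcomm : ∀ z v : ℝ, (v ^ k)⁻¹ * exp (-z / v) * exp (-v / ζ) =
      (v ^ k)⁻¹ * exp (-v / ζ) * exp (-z / v) := fun _ _ => mul_right_comm _ _ _
  simp only [hcomm, mul_div_assoc]
  exact (strictMono_setIntegral_Ioi_div (integrableOn_inv_pow_mul_exp_neg_div k hζ hb)
    (fun v (hv : b < v) => by have := hb.trans hv; positivity) hb
    (lt_add_of_pos_right b ha)).const_mul (exp_pos _)

end TailIntegral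

section ShiftedExponential

variable {ζ : ℝ}

lemma isProbabilityMeasure_withDensity_shiftedExponential (hζ : 0 < ζ) (s : ℝ) :
    IsProbabilityMeasure (volume.withDensity fun t =>
      ENNReal.ofReal (if s ≤ t then ζ⁻¹ * exp (-(t - s) / ζ) else 0)) := by
  constructor
  rw [withDensity_apply _ MeasurableSet.univ, Measure.restrict_univ]
  have hpdf : ∀ t, ENNReal.ofReal (if s ≤ t then ζ⁻¹ * exp (-(t - s) / ζ) else 0) =
      ProbabilityTheory.exponentialPDF ζ⁻¹ (t + -s) := fun t => by
    simp only [ProbabilityTheory.exponentialPDF_eq, ← sub_eq_add_neg, sub_nonneg]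
    congr 3
    field_simp
  simp_rw [hpdf]
  rw [lintegral_add_right_eq_self (ProbabilityTheory.exponentialPDF ζ⁻¹) (-s)]
  exact ProbabilityTheory.lintegral_exponentialPDF_eq_one (inv_pos.2 hζ)

lemma withDensity_shiftedExponential_le (hζ : 0 ≤ ζ) (s : ℝ) :
    volume.withDensity (fun t =>
      ENNReal.ofReal (if s ≤ t then ζ⁻¹ * exp (-(t - s) / ζ) else 0)) ≤
    ENNReal.ofReal ζ⁻¹ • volume := by
  rw [← withDensity_const]
  refine withDensity_mono (.of_forall fun t => ENNReal.ofReal_le_ofReal ?_)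
  split_ifs with h
  · exact mul_le_of_le_one_right (inv_nonneg.2 hζ)
      (exp_le_one_iff.2 (div_nonpos_of_nonpos_of_nonneg (by linarith) hζ))
  · exact inv_nonneg.2 hζ

end ShiftedExponential

lemma Nat.exists_lt_and_le_apply_and_apply_succ_le {α : Type*} [LinearOrder α] {G : ℕ → α}
    {γ : α} {n : ℕ} (hn : 0 < n) (h₀ : γ ≤ G 0) (hn' : G n ≤ γ) :
    ∃ m < n, γ ≤ G m ∧ G (m + 1) ≤ γ := by
  classical
  have hP : ∃ m, G (m + 1) ≤ γ := ⟨n - 1, by rwa [Nat.sub_add_cancel hn]⟩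
  refine ⟨Nat.find hP, ?_, ?_, Nat.find_spec hP⟩
  · by_contra! h
    exact absurd (Nat.find_min' hP (m := n - 1) (by rwa [Nat.sub_add_cancel hn])) (by omega)
  · rcases hm : Nat.find hP with _ | m
    · exact h₀
    · exact (not_le.1 (Nat.find_min hP (hm ▸ Nat.lt_succ_self m))).le

section StairProduct

variable {M : ℕ} {φ : ℝ → ℝ} {γ δ : ℝ}

def stairProd (φ : ℝ → ℝ) (δ : ℝ) (i : ℕ) (x : Fin M → ℝ) : ℝ :=
  ∏ j, φ (x j + if (j : ℕ) < i then -δ else δ)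

lemma stairProd_update (i : ℕ) (x : Fin M → ℝ) (m : Fin M) (t : ℝ) :
    stairProd φ δ i (Function.update x m t) = φ (t + if (m : ℕ) < i then -δ else δ) *
      ∏ j ∈ {m}ᶜ, φ (x j + if (j : ℕ) < i then -δ else δ) := by
  rw [stairProd, Fintype.prod_eq_mul_prod_compl m, Function.update_self]
  congr 1
  refine Finset.prod_congr rfl fun j hj => ?_
  rw [Function.update_of_ne (by simpa using hj)]

lemma ediam_setOf_le_mul_and_mul_le (hφ : StrictMono φ) {c : ℝ} (hc : 0 < c) :
    Metric.ediam {t | γ ≤ φ (t + δ) * c ∧ φ (t - δ) * c ≤ γ} ≤ ENNReal.ofReal (2 * δ) := by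
  have key : ∀ t ∈ {t | γ ≤ φ (t + δ) * c ∧ φ (t - δ) * c ≤ γ},
      ∀ t' ∈ {t | γ ≤ φ (t + δ) * c ∧ φ (t - δ) * c ≤ γ}, t - t' ≤ 2 * δ := by
    rintro t ⟨-, ht⟩ t' ⟨ht', -⟩
    by_contra! h
    have := mul_lt_mul_of_pos_right (hφ (by linarith : t' + δ < t - δ)) hc
    linarith
  refine Metric.ediam_le fun t ht t' ht' => ?_
  rw [edist_dist, Real.dist_eq]
  exact ENNReal.ofReal_le_ofReal (abs_sub_le_iff.2 ⟨key t ht t' ht', key t' ht' t ht⟩)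

lemma setOf_exists_prod_eq_subset_iUnion (hφ : Monotone φ) (hφ₀ : ∀ t, 0 ≤ φ t) (hM : 0 < M) :
    {x : Fin M → ℝ | ∃ y : Fin M → ℝ, ∏ j, φ (y j) = γ ∧ ∀ j, |x j - y j| < δ} ⊆
      ⋃ m : Fin M, {x | γ ≤ stairProd φ δ m x ∧ stairProd φ δ (m + 1) x ≤ γ} := by
  rintro x ⟨y, rfl, hxy⟩
  have h₀ : ∏ j, φ (y j) ≤ stairProd φ δ 0 x :=
    Finset.prod_le_prod (fun j _ => hφ₀ _) fun j _ => hφ <| by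
      simp only [Nat.not_lt_zero, if_false]; linarith [(abs_lt.1 (hxy j)).1]
  have hM' : stairProd φ δ M x ≤ ∏ j, φ (y j) :=
    Finset.prod_le_prod (fun j _ => hφ₀ _) fun j _ => hφ <| by
      simp only [j.is_lt, if_true]; linarith [(abs_lt.1 (hxy j)).2]
  obtain ⟨m, hm, hm₁, hm₂⟩ :=
    Nat.exists_lt_and_le_apply_and_apply_succ_le (G := fun i => stairProd φ δ i x) hM h₀ hM'
  exact mem_iUnion.2 ⟨⟨m, hm⟩, hm₁, hm₂⟩

variable {μ : Measure ℝ} [IsProbabilityMeasure μ] {L : ℝ≥0∞}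

lemma measure_pi_stairBand_le (hμ : μ ≤ L • volume) (hφ : StrictMono φ) (hφ₀ : ∀ t, 0 < φ t)
    (m : Fin M) :
    Measure.pi (fun _ : Fin M => μ) {x | γ ≤ stairProd φ δ m x ∧ stairProd φ δ (m + 1) x ≤ γ} ≤
      L * ENNReal.ofReal (2 * δ) := by
  have hmeas : ∀ i, Measurable (stairProd (M := M) φ δ i) := fun i =>
    Finset.measurable_prod _ fun j _ => hφ.monotone.measurable.comp (by fun_prop)
  refine Measure.pi_le_of_forall_measure_update_le
    ((measurableSet_le measurable_const (hmeas _)).inter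
      (measurableSet_le (hmeas _) measurable_const)) m fun x => ?_
  set c := ∏ j ∈ {m}ᶜ, φ (x j + if (j : ℕ) < m then -δ else δ)
  have hc : 0 < c := Finset.prod_pos fun j _ => hφ₀ _
  have hsucc : ∏ j ∈ {m}ᶜ, φ (x j + if (j : ℕ) < m + 1 then -δ else δ) = c := by
    refine Finset.prod_congr rfl fun j hj => ?_
    have : (j : ℕ) ≠ m := Fin.val_ne_of_ne (by simpa using hj)
    simp only [show (j : ℕ) < m + 1 ↔ (j : ℕ) < m by omega]
  have hslice : Function.update x m ⁻¹'
      {x | γ ≤ stairProd φ δ m x ∧ stairProd φ δ (m + 1) x ≤ γ} =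
      {t | γ ≤ φ (t + δ) * c ∧ φ (t - δ) * c ≤ γ} := by
    ext t
    simp only [mem_preimage, mem_ofPred_eq, stairProd_update, hsucc, lt_irrefl, if_false,
      Nat.lt_succ_self, if_true, ← sub_eq_add_neg, c]
  calc μ (Function.update x m ⁻¹' _)
      ≤ L * volume {t | γ ≤ φ (t + δ) * c ∧ φ (t - δ) * c ≤ γ} := hslice ▸ hμ _
    _ ≤ L * ENNReal.ofReal (2 * δ) := by
      gcongr
      exact (Real.volume_le_diam _).trans (ediam_setOf_le_mul_and_mul_le hφ hc)

theorem measure_pi_setOf_exists_prod_eq_le (hμ : μ ≤ L • volume) (hφ : StrictMono φ)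
    (hφ₀ : ∀ t, 0 < φ t) (hM : 0 < M) :
    Measure.pi (fun _ : Fin M => μ) {x | ∃ y : Fin M → ℝ, ∏ j, φ (y j) = γ ∧ ∀ j, |x j - y j| < δ} ≤
      M * (L * ENNReal.ofReal (2 * δ)) :=
  calc _ ≤ Measure.pi (fun _ : Fin M => μ)
        (⋃ m : Fin M, {x | γ ≤ stairProd φ δ m x ∧ stairProd φ δ (m + 1) x ≤ γ}) :=
        measure_mono (setOf_exists_prod_eq_subset_iUnion hφ.monotone (fun t => (hφ₀ t).le) hM)
    _ ≤ ∑ m : Fin M, L * ENNReal.ofReal (2 * δ) :=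
        (measure_iUnion_fintype_le _ _).trans
          (Finset.sum_le_sum fun m _ => measure_pi_stairBand_le hμ hφ hφ₀ m)
    _ = M * (L * ENNReal.ofReal (2 * δ)) := by simp

end StairProduct

theorem boundary_region_probability_small_general
    (M : ℕ) (hM : 1 ≤ M)
    (σw2 ζ σa2 γ : ℝ) (hσw2 : 0 < σw2) (hζ : 0 < ζ) (hσa2 : 0 < σa2)
    (Λ : ℕ → ℝ → ℝ)
    (hΛ : ∀ (k : ℕ) (z : ℝ), Λ k z = Real.exp (σa2 / ζ) *
      (∫ v in Set.Ioi (σw2 + σa2),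
        (v ^ k)⁻¹ * Real.exp (-z / v) * Real.exp (-v / ζ)) /
      (∫ v in Set.Ioi σw2,
        (v ^ k)⁻¹ * Real.exp (-z / v) * Real.exp (-v / ζ)))
    (C : ℕ → Set (Fin M → ℝ))
    (hC : ∀ k : ℕ, C k =
      {x : Fin M → ℝ | (∀ m, 0 < x m) ∧ ∏ m, Λ k ((k : ℝ) * x m) = γ})
    (R : ℕ → ℝ → Set (Fin M → ℝ))
    (hR : ∀ (k : ℕ) (δ : ℝ), R k δ =
      {x : Fin M → ℝ | ∃ y ∈ C k, ∀ m, |x m - y m| < δ})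
    (μ : Measure ℝ)
    (hμ : μ = volume.withDensity fun t =>
      ENNReal.ofReal (if σw2 ≤ t then ζ⁻¹ * Real.exp (-(t - σw2) / ζ) else 0)) :
    (∀ k : ℕ, 1 ≤ k → ∀ δ : ℝ, 0 < δ →
      Measure.pi (fun _ : Fin M => μ) (R k δ)
        ≤ ENNReal.ofReal (2 * M * δ / ζ)) ∧
    (∀ ε : ℝ, 0 < ε → ∃ δ : ℝ, 0 < δ ∧ ∀ k : ℕ, 1 ≤ k →
      Measure.pi (fun _ : Fin M => μ) (R k δ) < ENNReal.ofReal ε) := by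
  have : IsProbabilityMeasure μ := hμ ▸ isProbabilityMeasure_withDensity_shiftedExponential hζ σw2
  have hdens : μ ≤ ENNReal.ofReal ζ⁻¹ • volume := hμ ▸ withDensity_shiftedExponential_le hζ.le σw2
  have hbound : ∀ k : ℕ, 1 ≤ k → ∀ δ : ℝ, 0 < δ →
      Measure.pi (fun _ : Fin M => μ) (R k δ) ≤ ENNReal.ofReal (2 * M * δ / ζ) := by
    intro k hk δ hδ
    have hΛk : Λ k = _ := funext (hΛ k)
    have hφ : StrictMono fun t => Λ k (k * t) := hΛk ▸
      (strictMono_likelihoodRatio k hζ hσw2 hσa2).comp (strictMono_mul_left_of_pos (by positivity))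
    have hRsub : R k δ ⊆ {x | ∃ y : Fin M → ℝ, ∏ j, Λ k (k * y j) = γ ∧ ∀ j, |x j - y j| < δ} := by
      rw [hR, hC]
      rintro x ⟨y, ⟨-, hy⟩, hxy⟩
      exact ⟨y, hy, hxy⟩
    calc Measure.pi (fun _ : Fin M => μ) (R k δ)
        ≤ M * (ENNReal.ofReal ζ⁻¹ * ENNReal.ofReal (2 * δ)) :=
          (measure_mono hRsub).trans (measure_pi_setOf_exists_prod_eq_le hdens hφ
            (fun t => hΛk ▸ likelihoodRatio_pos k hζ hσw2 hσa2 _) hM)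
      _ = ENNReal.ofReal (2 * M * δ / ζ) := by
          rw [← ENNReal.ofReal_mul (by positivity), ← ENNReal.ofReal_natCast,
            ← ENNReal.ofReal_mul (by positivity)]
          ring_nf
  refine ⟨hbound, fun ε hε => ⟨ζ * ε / (4 * M), by positivity, fun k hk => ?_⟩⟩
  refine (hbound k hk _ (by positivity)).trans_lt ((ENNReal.ofReal_lt_ofReal_iff hε).2 ?_)
  have : (0 : ℝ) < M := by exact_mod_cast hM
  field_simp
  linarith

/-- Lemma 5: the probability (under the law of `σ_w²` plus i.i.d. exponential
jammer powers) of the coordinate-wise `δ`-thickening of the boundary curve of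
Willie's optimal detector is at most `2Mδ/ζ`; in particular it can be made
arbitrarily small, uniformly in the per-block sample size `k`. -/
theorem boundary_region_probability_small
    (M : ℕ) (hM : 1 ≤ M)
    (σw2 ζ σa2 γ : ℝ) (hσw2 : 0 < σw2) (hζ : 0 < ζ) (hσa2 : 0 < σa2)
    (hγ : 0 < γ)
    (Λ : ℕ → ℝ → ℝ)
    (hΛ : ∀ (k : ℕ) (z : ℝ), Λ k z = Real.exp (σa2 / ζ) *
      (∫ v in Set.Ioi (σw2 + σa2),
        (v ^ k)⁻¹ * Real.exp (-z / v) * Real.exp (-v / ζ)) /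
      (∫ v in Set.Ioi σw2,
        (v ^ k)⁻¹ * Real.exp (-z / v) * Real.exp (-v / ζ)))
    (C : ℕ → Set (Fin M → ℝ))
    (hC : ∀ k : ℕ, C k =
      {x : Fin M → ℝ | (∀ m, 0 < x m) ∧ ∏ m, Λ k ((k : ℝ) * x m) = γ})
    (R : ℕ → ℝ → Set (Fin M → ℝ))
    (hR : ∀ (k : ℕ) (δ : ℝ), R k δ =
      {x : Fin M → ℝ | ∃ y ∈ C k, ∀ m, |x m - y m| < δ})
    (μ : Measure ℝ)
    (hμ : μ = volume.withDensity fun t =>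
      ENNReal.ofReal (if σw2 ≤ t then ζ⁻¹ * Real.exp (-(t - σw2) / ζ) else 0)) :
    (∀ k : ℕ, 1 ≤ k → ∀ δ : ℝ, 0 < δ →
      Measure.pi (fun _ : Fin M => μ) (R k δ)
        ≤ ENNReal.ofReal (2 * M * δ / ζ)) ∧
    (∀ ε : ℝ, 0 < ε → ∃ δ : ℝ, 0 < δ ∧ ∀ k : ℕ, 1 ≤ k →
      Measure.pi (fun _ : Fin M => μ) (R k δ) < ENNReal.ofReal ε) :=
  boundary_region_probability_small_general M hM σw2 ζ σa2 γ hσw2 hζ hσa2 Λ hΛ C hC R hR μ hμ
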